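/- arXiv:1805.12335 — 2 statements merged into one kernel-verified Lean document; each statement's English description precedes it below -/
import Mathlib

section
/- For every γ ∈ GL_r(F_∞) there exists a constant c₃ > 0 such that for every ω ∈ Ω^r: h(γ(ω)) ≥ c₃·h(ω). (One may take c₃ = (c₂'c₃')^{−1}, where c₂' is the largest absolute value of an entry of γ and c₃' is the largest absolute value of an entry of γ^{−1}.) -/
/-!
Since `γ(ω) = j(γ,ω)⁻¹ · γω` and `h` is invariant under scaling by a nonzero scalar, it suffices
to compare `h(γω)` with `h(ω)`. The ultrametric inequality gives `|γω| ≤ c₂'|ω|`. A unimodular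
form `ℓ` evaluated at `γω` is the form `ℓγ` evaluated at `ω`; as `ℓ = (ℓγ)γ⁻¹`, the largest
coefficient of `ℓγ` has absolute value at least `c₃'⁻¹`, and dividing `ℓγ` by that coefficient
gives a unimodular form, so `|ℓ(γω)| ≥ c₃'⁻¹ · inf_{ℓ'} |ℓ'(ω)|`.
-/

noncomputable section

namespace Paper

/-- The sup-norm `|ω| = max_i |ω_i|` of a vector. -/
noncomputable def supNorm {K : Type*} [NormedField K] {m : ℕ} (ω : Fin m → K) : ℝ :=
  ⨆ i, ‖ω i‖

/-- A linear form with coefficients `ℓ i` in `F_∞` is unimodular if its largest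
coefficient has absolute value `1`. -/
def Unimodular {K : Type*} [NormedField K] (Finf : Subfield K) {m : ℕ} (ℓ : Fin m → K) : Prop :=
  (∀ i, ℓ i ∈ Finf) ∧ supNorm ℓ = 1

/-- `h(ω) = |ω|⁻¹ · inf {|ℓ(ω)| : ℓ a unimodular F_∞-linear form}`. -/
noncomputable def hOm {K : Type*} [NormedField K] (Finf : Subfield K) {m : ℕ}
    (ω : Fin m → K) : ℝ :=
  (supNorm ω)⁻¹ *
    sInf {x : ℝ | ∃ ℓ : Fin m → K, Unimodular Finf ℓ ∧ x = ‖∑ i, ℓ i * ω i‖}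

/-- The Drinfeld period domain `Ω^{m+1}`: vectors with `F_∞`-linearly independent entries
and last entry `ξ`. -/
def Omega {K : Type*} [NormedField K] (Finf : Subfield K) (ξ : K) (m : ℕ) :
    Set (Fin (m + 1) → K) :=
  {ω | (∀ c : Fin (m + 1) → K, (∀ i, c i ∈ Finf) → ∑ i, c i * ω i = 0 → ∀ i, c i = 0) ∧
    ω (Fin.last m) = ξ}

/-- `Ω^{m+1}_n = {ω ∈ Ω^{m+1} : h(ω) ≥ |π|^n}` where `|π| = q⁻¹`. -/
def OmegaN {K : Type*} [NormedField K] (Finf : Subfield K) (ξ : K) (q : ℕ) (m n : ℕ) :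
    Set (Fin (m + 1) → K) :=
  {ω | ω ∈ Omega Finf ξ m ∧ ((q : ℝ))⁻¹ ^ n ≤ hOm Finf ω}

/-- The automorphy factor `j(γ,ω) = ξ⁻¹·(last entry of γω)`. -/
noncomputable def jmap {K : Type*} [NormedField K] (ξ : K) {m : ℕ}
    (γ : Matrix (Fin (m + 1)) (Fin (m + 1)) K) (ω : Fin (m + 1) → K) : K :=
  ξ⁻¹ * (γ.mulVec ω) (Fin.last m)

/-- The action `γ(ω) = j(γ,ω)⁻¹·γω` of `GL_{m+1}(F_∞)` on `Ω^{m+1}`. -/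
noncomputable def gact {K : Type*} [NormedField K] (ξ : K) {m : ℕ}
    (γ : Matrix (Fin (m + 1)) (Fin (m + 1)) K) (ω : Fin (m + 1) → K) : Fin (m + 1) → K :=
  fun i => (jmap ξ γ ω)⁻¹ * (γ.mulVec ω) i

open Matrix
open scoped Pointwise

-- With the entrywise sup norm, `‖γ‖` and `‖γ⁻¹‖` are the constants `c₂'` and `c₃'`.
attribute [local instance] Matrix.normedAddCommGroup

section PiNorm

variable {ι : Type*} [Fintype ι]

theorem supNorm_eq_norm {K : Type*} [NormedField K] {m : ℕ} (ω : Fin m → K) :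
    supNorm ω = ‖ω‖ :=
  le_antisymm (Real.iSup_le (norm_le_pi_norm ω) (norm_nonneg ω))
    ((pi_norm_le_iff_of_nonneg (Real.iSup_nonneg fun _ => norm_nonneg _)).2
      fun i => le_ciSup (f := fun i => ‖ω i‖) (Set.finite_range _).bddAbove i)

theorem exists_norm_apply_eq_pi_norm [Nonempty ι] {E : Type*} [SeminormedAddCommGroup E]
    (x : ι → E) : ∃ i, ‖x i‖ = ‖x‖ := by
  obtain ⟨i, hi⟩ := Finite.exists_max fun i => ‖x i‖
  exact ⟨i, le_antisymm (norm_le_pi_norm x i) ((pi_norm_le_iff_of_nonneg (norm_nonneg _)).2 hi)⟩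

variable {κ K : Type*} [Fintype κ] [NormedField K] [IsUltrametricDist K]

theorem norm_dotProduct_le_of_ultrametric (v w : ι → K) : ‖v ⬝ᵥ w‖ ≤ ‖v‖ * ‖w‖ :=
  IsUltrametricDist.norm_sum_le_of_forall_le_of_nonneg (by positivity) fun i _ => by
    rw [norm_mul]
    exact mul_le_mul (norm_le_pi_norm v i) (norm_le_pi_norm w i) (norm_nonneg _) (norm_nonneg _)

theorem norm_mulVec_le_of_ultrametric (A : Matrix ι κ K) (v : κ → K) :
    ‖A *ᵥ v‖ ≤ ‖A‖ * ‖v‖ :=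
  (pi_norm_le_iff_of_nonneg (by positivity)).2 fun i =>
    (norm_dotProduct_le_of_ultrametric (A i) v).trans
      (mul_le_mul_of_nonneg_right (norm_le_pi_norm A i) (norm_nonneg v))

theorem norm_vecMul_le_of_ultrametric (v : ι → K) (A : Matrix ι κ K) :
    ‖v ᵥ* A‖ ≤ ‖A‖ * ‖v‖ := by
  rw [← mulVec_transpose, ← norm_transpose A]
  exact norm_mulVec_le_of_ultrametric Aᵀ v

end PiNorm

section UnimodularForms

variable {K : Type*} [NormedField K] {Finf : Subfield K} {n : ℕ}

theorem unimodular_iff {ℓ : Fin n → K} : Unimodular Finf ℓ ↔ (∀ i, ℓ i ∈ Finf) ∧ ‖ℓ‖ = 1 := by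
  rw [Unimodular, supNorm_eq_norm]

variable (Finf)

def unimodularValues (ω : Fin n → K) : Set ℝ :=
  {x | ∃ ℓ, Unimodular Finf ℓ ∧ x = ‖ℓ ⬝ᵥ ω‖}

theorem hOm_eq (ω : Fin n → K) : hOm Finf ω = ‖ω‖⁻¹ * sInf (unimodularValues Finf ω) := by
  rw [hOm, supNorm_eq_norm]
  rfl

theorem unimodularValues_nonempty (ω : Fin (n + 1) → K) : (unimodularValues Finf ω).Nonempty := by
  refine ⟨_, Pi.single 0 1, unimodular_iff.2 ⟨fun i => ?_, by rw [Pi.norm_single, norm_one]⟩, rfl⟩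
  rcases eq_or_ne i 0 with rfl | hi
  · simp [one_mem]
  · simp [hi, zero_mem]

theorem unimodularValues_bddBelow (ω : Fin n → K) : BddBelow (unimodularValues Finf ω) :=
  ⟨0, by rintro _ ⟨ℓ, -, rfl⟩; exact norm_nonneg _⟩

theorem sInf_unimodularValues_nonneg (ω : Fin n → K) : 0 ≤ sInf (unimodularValues Finf ω) :=
  Real.sInf_nonneg <| by rintro _ ⟨ℓ, -, rfl⟩; exact norm_nonneg _

theorem unimodularValues_smul (c : K) (ω : Fin n → K) :
    unimodularValues Finf (c • ω) = ‖c‖ • unimodularValues Finf ω := by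
  ext x
  simp only [unimodularValues, Set.mem_smul_set, dotProduct_smul, smul_eq_mul, norm_mul]
  constructor
  · rintro ⟨ℓ, hℓ, rfl⟩
    exact ⟨_, ⟨ℓ, hℓ, rfl⟩, rfl⟩
  · rintro ⟨_, ⟨ℓ, hℓ, rfl⟩, rfl⟩
    exact ⟨ℓ, hℓ, rfl⟩

theorem hOm_smul {c : K} (hc : c ≠ 0) (ω : Fin n → K) : hOm Finf (c • ω) = hOm Finf ω := by
  have hc' : ‖c‖ ≠ 0 := norm_ne_zero_iff.2 hc
  rw [hOm_eq, hOm_eq, unimodularValues_smul, Real.sInf_smul_of_nonneg (norm_nonneg c), norm_smul,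
    smul_eq_mul, mul_inv, mul_mul_mul_comm, inv_mul_cancel₀ hc', one_mul]

/-- Rescaling a nonzero form `ℓ` by its largest coefficient makes it unimodular. -/
theorem norm_mul_sInf_unimodularValues_le {ℓ : Fin n → K} (hℓ : ∀ i, ℓ i ∈ Finf)
    (ω : Fin n → K) : ‖ℓ‖ * sInf (unimodularValues Finf ω) ≤ ‖ℓ ⬝ᵥ ω‖ := by
  rcases eq_or_ne ℓ 0 with rfl | hℓ0
  · simp
  have : Nonempty (Fin n) := ⟨(Function.ne_iff.1 hℓ0).choose⟩
  obtain ⟨j, hj⟩ := exists_norm_apply_eq_pi_norm ℓ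
  have hℓ0' : ‖ℓ‖ ≠ 0 := norm_ne_zero_iff.2 hℓ0
  have hunimod : Unimodular Finf ((ℓ j)⁻¹ • ℓ) :=
    unimodular_iff.2 ⟨fun i => mul_mem (inv_mem (hℓ j)) (hℓ i),
      by rw [norm_smul, norm_inv, hj, inv_mul_cancel₀ hℓ0']⟩
  calc ‖ℓ‖ * sInf (unimodularValues Finf ω) ≤ ‖ℓ‖ * ‖((ℓ j)⁻¹ • ℓ) ⬝ᵥ ω‖ :=
        mul_le_mul_of_nonneg_left
          (csInf_le (unimodularValues_bddBelow Finf ω) ⟨_, hunimod, rfl⟩) (norm_nonneg _)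
    _ = ‖ℓ ⬝ᵥ ω‖ := by
        rw [smul_dotProduct, norm_smul, norm_inv, hj, ← mul_assoc, mul_inv_cancel₀ hℓ0', one_mul]

variable [IsUltrametricDist K]

theorem inv_norm_nonsing_inv_mul_le_sInf_unimodularValues_mulVec
    {γ : Matrix (Fin (n + 1)) (Fin (n + 1)) K} (hγF : ∀ i j, γ i j ∈ Finf) (hγ : IsUnit γ.det)
    (ω : Fin (n + 1) → K) :
    ‖γ⁻¹‖⁻¹ * sInf (unimodularValues Finf ω) ≤ sInf (unimodularValues Finf (γ *ᵥ ω)) := by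
  have hγinv : 0 < ‖γ⁻¹‖ :=
    norm_pos_iff.2 (isUnit_nonsing_inv_iff.2 ((isUnit_iff_isUnit_det γ).2 hγ)).ne_zero
  refine le_csInf (unimodularValues_nonempty Finf _) ?_
  rintro _ ⟨ℓ, hℓ, rfl⟩
  rw [unimodular_iff] at hℓ
  have hpullback : ‖γ⁻¹‖⁻¹ ≤ ‖ℓ ᵥ* γ‖ := by
    rw [inv_le_iff_one_le_mul₀' hγinv]
    calc 1 = ‖(ℓ ᵥ* γ) ᵥ* γ⁻¹‖ := by rw [vecMul_vecMul, mul_nonsing_inv γ hγ, vecMul_one, hℓ.2]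
      _ ≤ ‖γ⁻¹‖ * ‖ℓ ᵥ* γ‖ := norm_vecMul_le_of_ultrametric _ _
  rw [dotProduct_mulVec]
  calc ‖γ⁻¹‖⁻¹ * sInf (unimodularValues Finf ω)
      ≤ ‖ℓ ᵥ* γ‖ * sInf (unimodularValues Finf ω) :=
        mul_le_mul_of_nonneg_right hpullback (sInf_unimodularValues_nonneg Finf ω)
    _ ≤ ‖(ℓ ᵥ* γ) ⬝ᵥ ω‖ :=
        norm_mul_sInf_unimodularValues_le Finf (ℓ := ℓ ᵥ* γ)
          (fun j => sum_mem (t := Finset.univ) fun i _ => mul_mem (hℓ.1 i) (hγF i j)) ω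

theorem inv_norm_mul_norm_nonsing_inv_mul_hOm_le_hOm_mulVec
    {γ : Matrix (Fin (n + 1)) (Fin (n + 1)) K} (hγF : ∀ i j, γ i j ∈ Finf) (hγ : IsUnit γ.det)
    (ω : Fin (n + 1) → K) :
    (‖γ‖ * ‖γ⁻¹‖)⁻¹ * hOm Finf ω ≤ hOm Finf (γ *ᵥ ω) := by
  rcases eq_or_ne ω 0 with rfl | hω
  · simp [hOm_eq]
  have hγω : γ *ᵥ ω ≠ 0 := by
    simpa using (mulVec_injective_iff_isUnit.2 ((isUnit_iff_isUnit_det γ).2 hγ)).ne hω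
  rw [hOm_eq, hOm_eq]
  calc (‖γ‖ * ‖γ⁻¹‖)⁻¹ * (‖ω‖⁻¹ * sInf (unimodularValues Finf ω))
      = (‖γ‖ * ‖ω‖)⁻¹ * (‖γ⁻¹‖⁻¹ * sInf (unimodularValues Finf ω)) := by ring
    _ ≤ ‖γ *ᵥ ω‖⁻¹ * sInf (unimodularValues Finf (γ *ᵥ ω)) :=
        mul_le_mul (inv_anti₀ (norm_pos_iff.2 hγω) (norm_mulVec_le_of_ultrametric γ ω))
          (inv_norm_nonsing_inv_mul_le_sInf_unimodularValues_mulVec Finf hγF hγ ω)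
          (mul_nonneg (by positivity) (sInf_unimodularValues_nonneg Finf ω)) (by positivity)

end UnimodularForms

theorem gact_eq_smul {K : Type*} [NormedField K] (ξ : K) {m : ℕ}
    (γ : Matrix (Fin (m + 1)) (Fin (m + 1)) K) (ω : Fin (m + 1) → K) :
    gact ξ γ ω = (jmap ξ γ ω)⁻¹ • γ *ᵥ ω :=
  rfl

/-- The last row of `γ` is a nonzero `F_∞`-linear form, so it does not vanish at `ω ∈ Ω`. -/
theorem jmap_ne_zero {K : Type*} [NormedField K] {Finf : Subfield K} {ξ : K} (hξ : ξ ≠ 0) {m : ℕ}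
    {γ : Matrix (Fin (m + 1)) (Fin (m + 1)) K} (hγF : ∀ i j, γ i j ∈ Finf) (hγ : γ.det ≠ 0)
    {ω : Fin (m + 1) → K} (hω : ω ∈ Omega Finf ξ m) : jmap ξ γ ω ≠ 0 :=
  mul_ne_zero (inv_ne_zero hξ) fun h =>
    hγ (det_eq_zero_of_row_eq_zero (Fin.last m) (hω.1 _ (hγF (Fin.last m)) h))

theorem statement7_general
    {K : Type*} [NormedField K] [IsUltrametricDist K]
    (Finf : Subfield K)
    (ξ : K) (hξ : ξ ≠ 0)
    (m : ℕ) (γ : Matrix (Fin (m + 1)) (Fin (m + 1)) K)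
    (hγF : ∀ i j, γ i j ∈ Finf) (hγdet : γ.det ≠ 0) :
    ∃ c₃ : ℝ, 0 < c₃ ∧ ∀ ω ∈ Omega Finf ξ m,
      c₃ * hOm Finf ω ≤ hOm Finf (gact ξ γ ω) := by
  have hγ : IsUnit γ.det := hγdet.isUnit
  have hγU : IsUnit γ := (isUnit_iff_isUnit_det γ).2 hγ
  refine ⟨(‖γ‖ * ‖γ⁻¹‖)⁻¹, ?_, fun ω hω => ?_⟩
  · exact inv_pos.2 (mul_pos (norm_pos_iff.2 hγU.ne_zero)
      (norm_pos_iff.2 (isUnit_nonsing_inv_iff.2 hγU).ne_zero))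
  · rw [gact_eq_smul, hOm_smul Finf (inv_ne_zero (jmap_ne_zero hξ hγF hγdet hω))]
    exact inv_norm_mul_norm_nonsing_inv_mul_hOm_le_hOm_mulVec Finf hγF hγ ω

/-- For every `γ ∈ GL_r(F_∞)` there exists `c₃ > 0` such that for every
`ω ∈ Ω^r`:  `h(γ(ω)) ≥ c₃·h(ω)`. -/
theorem statement7
    (p k q : ℕ) (hp : p.Prime) (hqpk : q = p ^ k) (hk : 0 < k)
    {K : Type*} [NormedField K] [CompleteSpace K] [IsAlgClosed K] [IsUltrametricDist K]
    [CharP K p]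
    (t : K) (ht : ‖t‖ = (q : ℝ))
    (Fq : Subfield K) (hFq : (Fq : Set K) = {x : K | x ^ q = x})
    (F : Subfield K) (hF : F = Subfield.closure ((Fq : Set K) ∪ {t}))
    (A : Subring K) (hA : A = Subring.closure ((Fq : Set K) ∪ {t}))
    (Finf : Subfield K) (hFinf : (Finf : Set K) = closure (F : Set K))
    (ξ : K) (hξ : ξ ≠ 0)
    (m : ℕ) (γ : Matrix (Fin (m + 1)) (Fin (m + 1)) K)
    (hγF : ∀ i j, γ i j ∈ Finf) (hγdet : γ.det ≠ 0) :
    ∃ c₃ : ℝ, 0 < c₃ ∧ ∀ ω ∈ Omega Finf ξ m,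
      c₃ * hOm Finf ω ≤ hOm Finf (gact ξ γ ω) :=
  statement7_general Finf ξ hξ m γ hγF hγdet

end Paper
end
end

section
/- For every ρ > 0 and every integer n ≥ 1, if λ' ∈ Λ'∖{0} and there exists (ω₁, ω') ∈ C_∞ × Ω^{r−1}_n with |ω₁| ≤ ρ and |ω₁ + λ'ω'| ≤ ρ, then |λ'| ≤ ρ·|π|^{−n}·|ξ|^{−1}, where |λ'| denotes the maximum of the absolute values of the entries of λ'. Consequently the set of such λ' is finite, i.e. the translation action of Λ' on C_∞ × Ω^{r−1} given by (ω₁,ω') ↦ (ω₁ + λ'ω', ω') is discontinuous on the sets B(0,ρ) × Ω^{r−1}_n. -/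
/-!
Divide `λ'` by a coordinate of largest absolute value: the result `ℓ` is a unimodular form with
`|ℓω'| = |λ'ω'| / |λ'|`, so `|π|^n |ξ| ≤ |π|^n |ω'| ≤ h(ω') |ω'| ≤ |λ'ω'| / |λ'|`, and
`|λ'ω'| ≤ max(|ω₁ + λ'ω'|, |ω₁|) ≤ ρ` by the ultrametric inequality.

For finiteness, `|P(t)| = q^{deg P}` for `0 ≠ P ∈ 𝔽_q[t]`, so `A` meets every ball in finitely many
points, and so does `A^{s+1}`. Two vectors of the ball `|λ'| ≤ C` lying in the same coset of
`Λ' ∩ A^{s+1}` differ by a vector of `A^{s+1}` in that ball, and there are finitely many cosets.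
-/

noncomputable section

namespace Paper

/-- A subgroup `H` of `(K,+)` is strongly discrete if its intersection with every ball of
finite radius is finite. -/
def StronglyDiscrete {K : Type*} [NormedField K] (H : AddSubgroup K) : Prop :=
  ∀ ρ : ℝ, 0 < ρ → {z : K | z ∈ H ∧ ‖z‖ ≤ ρ}.Finite

/-- The exponential function `e_H(z) = z·∏_{h ∈ H∖{0}} (1 − z/h)` associated to a strongly
discrete subgroup `H ⊂ K`. -/
noncomputable def eH {K : Type*} [NormedField K] (H : AddSubgroup K) (z : K) : K :=
  z * ∏' h : {x : K // x ∈ H ∧ x ≠ 0}, (1 - z / h.1)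

/-- The additive homomorphism `λ' ↦ λ'ω' = ∑ i, λ'_i ω'_i` (matrix product of a row vector
with a column vector).  `Λ'ω'` is its image `Λ'.map (pairHom ω')`. -/
def pairHom {K : Type*} [NormedField K] {m : ℕ} (ω' : Fin m → K) : (Fin m → K) →+ K where
  toFun lam := ∑ i, lam i * ω' i
  map_zero' := by simp
  map_add' x y := by simp [add_mul, Finset.sum_add_distrib]

/-- `F_∞^{m}ω' = {xω' : x ∈ F_∞^m} ⊂ K`. -/
def Fspan {K : Type*} [NormedField K] (Finf : Subfield K) {m : ℕ} (ω' : Fin m → K) : Set K :=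
  {z | ∃ c : Fin m → K, (∀ i, c i ∈ Finf) ∧ z = ∑ i, c i * ω' i}

/-- `A^m ⊂ K^m`, the additive group of vectors with entries in `A`. -/
def Avec {K : Type*} [NormedField K] (A : Subring K) (m : ℕ) : AddSubgroup (Fin m → K) where
  carrier := {v | ∀ i, v i ∈ A}
  zero_mem' := by intro i; exact A.zero_mem
  add_mem' := by intro a b ha hb i; exact A.add_mem (ha i) (hb i)
  neg_mem' := by intro a ha i; exact A.neg_mem (ha i)

section SupNorm

variable {K : Type*} [NormedField K] {m : ℕ}

lemma supNorm_nonneg (v : Fin m → K) : 0 ≤ supNorm v :=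
  Real.iSup_nonneg fun _ => norm_nonneg _

lemma norm_le_supNorm (v : Fin (m + 1) → K) (i : Fin (m + 1)) : ‖v i‖ ≤ supNorm v :=
  le_ciSup (f := fun i => ‖v i‖) (Set.finite_range _).bddAbove i

lemma supNorm_le_iff {v : Fin (m + 1) → K} {C : ℝ} : supNorm v ≤ C ↔ ∀ i, ‖v i‖ ≤ C :=
  ⟨fun h i => (norm_le_supNorm v i).trans h, ciSup_le⟩

lemma exists_norm_eq_supNorm (v : Fin (m + 1) → K) : ∃ i, ‖v i‖ = supNorm v := by
  obtain ⟨i, hi⟩ := Finite.exists_max fun i => ‖v i‖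
  exact ⟨i, le_antisymm (norm_le_supNorm v i) (supNorm_le_iff.2 hi)⟩

lemma supNorm_pos {v : Fin (m + 1) → K} (hv : v ≠ 0) : 0 < supNorm v := by
  obtain ⟨i, hi⟩ := Function.ne_iff.1 hv
  exact (norm_pos_iff.2 hi).trans_le (norm_le_supNorm v i)

lemma supNorm_smul (c : K) (v : Fin (m + 1) → K) : supNorm (c • v) = ‖c‖ * supNorm v := by
  obtain ⟨i, hi⟩ := exists_norm_eq_supNorm v
  refine le_antisymm (supNorm_le_iff.2 fun j => ?_) ?_
  · rw [Pi.smul_apply, smul_eq_mul, norm_mul]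
    exact mul_le_mul_of_nonneg_left (norm_le_supNorm v j) (norm_nonneg c)
  · rw [← hi, ← norm_mul]
    exact norm_le_supNorm (c • v) i

end SupNorm

section PeriodDomain

variable {K : Type*} [NormedField K] {Finf : Subfield K} {m : ℕ}

lemma pairHom_smul (ω : Fin m → K) (c : K) (lam : Fin m → K) :
    pairHom ω (c • lam) = c * pairHom ω lam := by
  simp only [pairHom, AddMonoidHom.coe_mk, ZeroHom.coe_mk, Pi.smul_apply, smul_eq_mul,
    Finset.mul_sum, mul_assoc]

lemma hOm_le_of_unimodular {ℓ : Fin m → K} (hℓ : Unimodular Finf ℓ) (ω : Fin m → K) :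
    hOm Finf ω ≤ (supNorm ω)⁻¹ * ‖pairHom ω ℓ‖ :=
  mul_le_mul_of_nonneg_left
    (csInf_le ⟨0, by rintro x ⟨ℓ', -, rfl⟩; exact norm_nonneg _⟩ ⟨ℓ, hℓ, rfl⟩)
    (inv_nonneg.2 (supNorm_nonneg ω))

lemma unimodular_inv_smul {lam : Fin (m + 1) → K} (hlam : ∀ i, lam i ∈ Finf) (hlam0 : lam ≠ 0)
    {i : Fin (m + 1)} (hi : ‖lam i‖ = supNorm lam) : Unimodular Finf ((lam i)⁻¹ • lam) := by
  have hi0 : lam i ≠ 0 := norm_pos_iff.1 (hi ▸ supNorm_pos hlam0)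
  refine ⟨fun j => mul_mem (inv_mem (hlam i)) (hlam j), ?_⟩
  rw [supNorm_smul, norm_inv, hi, inv_mul_cancel₀ (supNorm_pos hlam0).ne']

lemma norm_le_supNorm_of_mem_Omega {ξ : K} {ω : Fin (m + 1) → K} (hω : ω ∈ Omega Finf ξ m) :
    ‖ξ‖ ≤ supNorm ω :=
  hω.2 ▸ norm_le_supNorm ω (Fin.last m)

theorem supNorm_le_of_mem_OmegaN {q n : ℕ} (hq : 0 < q) {ξ : K} (hξ : ξ ≠ 0)
    {lam ω : Fin (m + 1) → K} (hlam : ∀ i, lam i ∈ Finf) (hlam0 : lam ≠ 0)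
    (hω : ω ∈ OmegaN Finf ξ q m n) {ρ : ℝ} (hρ : ‖pairHom ω lam‖ ≤ ρ) :
    supNorm lam ≤ ρ * (q : ℝ) ^ n * ‖ξ‖⁻¹ := by
  obtain ⟨i, hi⟩ := exists_norm_eq_supNorm lam
  have hlam_pos := supNorm_pos hlam0
  have hξ_pos : 0 < ‖ξ‖ := norm_pos_iff.2 hξ
  have h := calc
    ((q : ℝ))⁻¹ ^ n ≤ hOm Finf ω := hω.2
    _ ≤ (supNorm ω)⁻¹ * ‖pairHom ω ((lam i)⁻¹ • lam)‖ :=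
      hOm_le_of_unimodular (unimodular_inv_smul hlam hlam0 hi) ω
    _ = (supNorm ω)⁻¹ * ((supNorm lam)⁻¹ * ‖pairHom ω lam‖) := by
      rw [pairHom_smul, norm_mul, norm_inv, hi]
    _ ≤ ‖ξ‖⁻¹ * ((supNorm lam)⁻¹ * ρ) := by
      gcongr
      exact norm_le_supNorm_of_mem_Omega hω.1
  rw [inv_pow, inv_le_iff_one_le_mul₀ (by positivity)] at h
  calc supNorm lam ≤ supNorm lam * (‖ξ‖⁻¹ * ((supNorm lam)⁻¹ * ρ) * (q : ℝ) ^ n) :=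
        le_mul_of_one_le_right hlam_pos.le h
    _ = ρ * (q : ℝ) ^ n * ‖ξ‖⁻¹ := by field_simp

theorem supNorm_le_of_norm_le_of_norm_add_le [IsUltrametricDist K] {q n : ℕ} (hq : 0 < q)
    {ξ : K} (hξ : ξ ≠ 0) {lam ω : Fin (m + 1) → K} (hlam : ∀ i, lam i ∈ Finf) (hlam0 : lam ≠ 0)
    (hω : ω ∈ OmegaN Finf ξ q m n) {ω₁ : K} {ρ : ℝ} (h₁ : ‖ω₁‖ ≤ ρ)
    (h₂ : ‖ω₁ + pairHom ω lam‖ ≤ ρ) : supNorm lam ≤ ρ * (q : ℝ) ^ n * ‖ξ‖⁻¹ := by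
  have h := IsUltrametricDist.norm_add_le_max (ω₁ + pairHom ω lam) (-ω₁)
  rw [add_neg_cancel_comm, norm_neg] at h
  exact supNorm_le_of_mem_OmegaN hq hξ hlam hlam0 hω (h.trans (max_le h₂ h₁))

end PeriodDomain

section PolynomialRing

variable {K : Type*} [NormedField K]

lemma norm_eq_one_of_pow_eq_self {q : ℕ} (hq : 2 ≤ q) {x : K} (hx : x ^ q = x) (hx0 : x ≠ 0) :
    ‖x‖ = 1 := by
  have hx1 : x ^ (q - 1) = 1 := by
    rw [← mul_left_inj' hx0, one_mul, ← pow_succ, Nat.sub_add_cancel (by omega : 1 ≤ q), hx]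
  refine (pow_eq_one_iff_of_nonneg (norm_nonneg x) (by omega : q - 1 ≠ 0)).1 ?_
  rw [← norm_pow, hx1, norm_one]

lemma finite_setOf_pow_eq_self {q : ℕ} (hq : 2 ≤ q) : {x : K | x ^ q = x}.Finite := by
  simpa [Polynomial.IsRoot, sub_eq_zero] using
    Polynomial.finite_setOfPred_isRoot (FiniteField.X_pow_card_sub_X_ne_zero K (p := q) hq)

lemma closure_union_singleton_eq_adjoin (k : Subfield K) (t : K) :
    Subring.closure ((k : Set K) ∪ {t}) = (Algebra.adjoin k {t}).toSubring := by
  rw [Algebra.adjoin_eq_ring_closure]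
  congr
  exact Subtype.range_coe.symm

variable [IsUltrametricDist K] {k : Subfield K} {t : K}

theorem norm_aeval_eq_pow_natDegree (hk : ∀ x ∈ k, x ≠ 0 → ‖x‖ = 1) (ht : 1 < ‖t‖)
    {P : Polynomial k} (hP : P ≠ 0) : ‖Polynomial.aeval t P‖ = ‖t‖ ^ P.natDegree := by
  set d := P.natDegree
  have hcoeff : ∀ i, ‖(P.coeff i : K)‖ ≤ 1 := fun i => by
    by_cases h : (P.coeff i : K) = 0
    · simp [h]
    · exact (hk _ (P.coeff i).2 h).le
  have hlead : ‖(P.coeff d : K) * t ^ d‖ = ‖t‖ ^ d := by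
    rw [norm_mul, norm_pow, hk _ (P.coeff d).2 (by simpa [d] using hP), one_mul]
  have hlow : ‖∑ i ∈ Finset.range d, (P.coeff i : K) * t ^ i‖ < ‖t‖ ^ d := by
    rcases Nat.eq_zero_or_pos d with hd | hd
    · simp [hd]
    refine (IsUltrametricDist.norm_sum_le_of_forall_le_of_nonneg (C := ‖t‖ ^ (d - 1))
      (by positivity) fun i hi => ?_).trans_lt (pow_lt_pow_right₀ ht (by omega))
    rw [norm_mul, norm_pow]
    exact (mul_le_of_le_one_left (by positivity) (hcoeff i)).trans
      (pow_le_pow_right₀ ht.le (by simp at hi; omega))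
  rw [Polynomial.aeval_eq_sum_range, Finset.sum_range_succ]
  change ‖∑ i ∈ Finset.range d, (P.coeff i : K) * t ^ i + (P.coeff d : K) * t ^ d‖ = _
  rw [IsUltrametricDist.norm_add_eq_max_of_norm_ne_norm (hlead ▸ hlow.ne), hlead,
    max_eq_right (hlead ▸ hlow.le)]

theorem finite_setOf_mem_adjoin_norm_le [Finite k] (hk : ∀ x ∈ k, x ≠ 0 → ‖x‖ = 1)
    (ht : 1 < ‖t‖) (C : ℝ) : {a : K | a ∈ Algebra.adjoin k {t} ∧ ‖a‖ ≤ C}.Finite := by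
  obtain ⟨D, hD⟩ := pow_unbounded_of_one_lt C ht
  refine (Set.finite_range fun c : Fin (D + 1) → k => ∑ i, (c i : K) * t ^ (i : ℕ)).subset ?_
  rintro a ⟨ha, haC⟩
  rw [Algebra.adjoin_singleton_eq_range_aeval] at ha
  obtain ⟨P, rfl⟩ := ha
  change ‖Polynomial.aeval t P‖ ≤ C at haC
  have hdeg : P.natDegree < D + 1 := by
    by_cases hP : P = 0
    · simp [hP]
    have := (norm_aeval_eq_pow_natDegree hk ht hP ▸ haC).trans_lt hD
    exact Nat.lt_succ_of_lt ((pow_lt_pow_iff_right₀ ht).1 this)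
  refine ⟨fun i => P.coeff i, ?_⟩
  change _ = Polynomial.aeval t P
  rw [Polynomial.aeval_eq_sum_range' hdeg, ← Fin.sum_univ_eq_sum_range]
  rfl

theorem finite_setOf_mem_closure_norm_le {q : ℕ} (hq : 2 ≤ q) {Fq : Subfield K}
    (hFq : (Fq : Set K) = {x : K | x ^ q = x}) (ht : ‖t‖ = q) (C : ℝ) :
    {a : K | a ∈ Subring.closure ((Fq : Set K) ∪ {t}) ∧ ‖a‖ ≤ C}.Finite := by
  have : Finite Fq := (hFq ▸ finite_setOf_pow_eq_self hq : (Fq : Set K).Finite).to_subtype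
  have hFq_norm : ∀ x ∈ Fq, x ≠ 0 → ‖x‖ = 1 := fun x hx =>
    norm_eq_one_of_pow_eq_self hq (by rwa [← SetLike.mem_coe, hFq] at hx)
  rw [closure_union_singleton_eq_adjoin]
  exact finite_setOf_mem_adjoin_norm_le hFq_norm (ht ▸ by exact_mod_cast hq) C

end PolynomialRing

theorem finite_of_relIndex_ne_zero {G : Type*} [AddGroup G] {H Λ : AddSubgroup G}
    (hH : H.relIndex Λ ≠ 0) {S : Set G} (hSΛ : S ⊆ Λ)
    (hS : ∀ x ∈ S, {y | y ∈ S ∧ -x + y ∈ H}.Finite) : S.Finite := by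
  have : Finite (Λ ⧸ H.addSubgroupOf Λ) := Nat.finite_of_card_ne_zero hH
  have hT : (Subtype.val ⁻¹' S : Set Λ).Finite := by
    refine Set.Finite.of_finite_fibers (QuotientAddGroup.mk (s := H.addSubgroupOf Λ))
      (Set.toFinite _) ?_
    rintro _ ⟨x, hx, rfl⟩
    refine ((hS x hx).preimage Subtype.val_injective.injOn).subset ?_
    rintro y ⟨hy, hxy⟩
    exact ⟨hy, AddSubgroup.mem_addSubgroupOf.1 (QuotientAddGroup.eq.1 hxy.symm)⟩
  rw [← Set.inter_eq_right.2 hSΛ, ← Subtype.image_preimage_coe]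
  exact hT.image Subtype.val

section Lattice

variable {K : Type*} [NormedField K] [IsUltrametricDist K] {m : ℕ}

theorem finite_setOf_mem_supNorm_le {A : Subring K} {Λ : AddSubgroup (Fin (m + 1) → K)}
    (hΛ : (Avec A (m + 1)).relIndex Λ ≠ 0) (hA : ∀ C, {a : K | a ∈ A ∧ ‖a‖ ≤ C}.Finite)
    (C : ℝ) : {lam | lam ∈ Λ ∧ supNorm lam ≤ C}.Finite := by
  refine finite_of_relIndex_ne_zero hΛ (fun _ h => h.1) fun x hx => ?_
  refine ((Set.Finite.pi fun _ => hA C).image (x + ·)).subset ?_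
  rintro y ⟨hy, hxy⟩
  refine ⟨-x + y, fun i _ => ⟨hxy i, ?_⟩, add_neg_cancel_left x y⟩
  refine (IsUltrametricDist.norm_add_le_max _ _).trans (max_le ?_ ?_)
  · exact norm_neg (x i) ▸ supNorm_le_iff.1 hx.2 i
  · exact supNorm_le_iff.1 hy.2 i

end Lattice

theorem statement11_general
    (p k q : ℕ) (hp : p.Prime) (hqpk : q = p ^ k) (hk : 0 < k)
    {K : Type*} [NormedField K] [IsUltrametricDist K]
    (t : K) (ht : ‖t‖ = (q : ℝ))
    (Fq : Subfield K) (hFq : (Fq : Set K) = {x : K | x ^ q = x})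
    (F : Subfield K)
    (A : Subring K) (hA : A = Subring.closure ((Fq : Set K) ∪ {t}))
    (Finf : Subfield K) (hFinf : (Finf : Set K) = closure (F : Set K))
    (ξ : K) (hξ : ξ ≠ 0)
    (s : ℕ) (Λ' : AddSubgroup (Fin (s + 1) → K))
    (hΛ'F : ∀ lam ∈ Λ', ∀ i, lam i ∈ F)
    (hco1 : (Λ' ⊓ Avec A (s + 1)).relIndex Λ' ≠ 0)
    (ρ : ℝ) (n : ℕ) :
    (∀ lam ∈ Λ', lam ≠ 0 →
      (∃ ω₁ : K, ∃ ω' ∈ OmegaN Finf ξ q s n,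
        ‖ω₁‖ ≤ ρ ∧ ‖ω₁ + pairHom ω' lam‖ ≤ ρ) →
      supNorm lam ≤ ρ * (q : ℝ) ^ n * ‖ξ‖⁻¹) ∧
    {lam : Fin (s + 1) → K | lam ∈ Λ' ∧
      ∃ ω₁ : K, ∃ ω' ∈ OmegaN Finf ξ q s n,
        ‖ω₁‖ ≤ ρ ∧ ‖ω₁ + pairHom ω' lam‖ ≤ ρ}.Finite := by
  have hq : 2 ≤ q := hqpk ▸ hp.two_le.trans (Nat.le_self_pow hk.ne' p)
  have hF_le : ∀ x ∈ F, x ∈ Finf := fun x hx => by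
    rw [← SetLike.mem_coe, hFinf]
    exact subset_closure hx
  have hbound : ∀ lam ∈ Λ', lam ≠ 0 →
      (∃ ω₁ : K, ∃ ω' ∈ OmegaN Finf ξ q s n, ‖ω₁‖ ≤ ρ ∧ ‖ω₁ + pairHom ω' lam‖ ≤ ρ) →
      supNorm lam ≤ ρ * (q : ℝ) ^ n * ‖ξ‖⁻¹ := by
    rintro lam hlam hlam0 ⟨ω₁, ω', hω', h₁, h₂⟩
    exact supNorm_le_of_norm_le_of_norm_add_le (by omega) hξ
      (fun i => hF_le _ (hΛ'F lam hlam i)) hlam0 hω' h₁ h₂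
  have hA_ball : ∀ C, {a : K | a ∈ A ∧ ‖a‖ ≤ C}.Finite :=
    hA ▸ finite_setOf_mem_closure_norm_le hq hFq ht
  refine ⟨hbound, ((finite_setOf_mem_supNorm_le (AddSubgroup.inf_relIndex_left Λ' _ ▸ hco1)
    hA_ball (ρ * (q : ℝ) ^ n * ‖ξ‖⁻¹)).union (Set.finite_singleton 0)).subset ?_⟩
  rintro lam ⟨hlam, hex⟩
  by_cases hlam0 : lam = 0
  · exact Or.inr hlam0
  · exact Or.inl ⟨hlam, hbound lam hlam hlam0 hex⟩

/-- (From the proof of Proposition 4.5.)  For `ρ > 0` and `n ≥ 1`: if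
`λ' ∈ Λ'∖{0}` and there exists `(ω₁, ω') ∈ C_∞ × Ω^{r−1}_n` with `|ω₁| ≤ ρ` and
`|ω₁ + λ'ω'| ≤ ρ`, then `|λ'| ≤ ρ·|π|^{−n}·|ξ|⁻¹ = ρ·q^n·|ξ|⁻¹`.  Consequently the set of
such `λ'` is finite (discontinuity of the translation action on `B(0,ρ) × Ω^{r−1}_n`). -/
theorem statement11
    (p k q : ℕ) (hp : p.Prime) (hqpk : q = p ^ k) (hk : 0 < k)
    {K : Type*} [NormedField K] [CompleteSpace K] [IsAlgClosed K] [IsUltrametricDist K]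
    [CharP K p]
    (t : K) (ht : ‖t‖ = (q : ℝ))
    (Fq : Subfield K) (hFq : (Fq : Set K) = {x : K | x ^ q = x})
    (F : Subfield K) (hF : F = Subfield.closure ((Fq : Set K) ∪ {t}))
    (A : Subring K) (hA : A = Subring.closure ((Fq : Set K) ∪ {t}))
    (Finf : Subfield K) (hFinf : (Finf : Set K) = closure (F : Set K))
    (ξ : K) (hξ : ξ ≠ 0)
    (s : ℕ) (Λ' : AddSubgroup (Fin (s + 1) → K))
    (hΛ'F : ∀ lam ∈ Λ', ∀ i, lam i ∈ F)
    (hco1 : (Λ' ⊓ Avec A (s + 1)).relIndex Λ' ≠ 0)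
    (hco2 : (Λ' ⊓ Avec A (s + 1)).relIndex (Avec A (s + 1)) ≠ 0)
    (ρ : ℝ) (hρ : 0 < ρ) (n : ℕ) (hn : 1 ≤ n) :
    (∀ lam ∈ Λ', lam ≠ 0 →
      (∃ ω₁ : K, ∃ ω' ∈ OmegaN Finf ξ q s n,
        ‖ω₁‖ ≤ ρ ∧ ‖ω₁ + pairHom ω' lam‖ ≤ ρ) →
      supNorm lam ≤ ρ * (q : ℝ) ^ n * ‖ξ‖⁻¹) ∧
    {lam : Fin (s + 1) → K | lam ∈ Λ' ∧
      ∃ ω₁ : K, ∃ ω' ∈ OmegaN Finf ξ q s n,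
        ‖ω₁‖ ≤ ρ ∧ ‖ω₁ + pairHom ω' lam‖ ≤ ρ}.Finite :=
  statement11_general p k q hp hqpk hk t ht Fq hFq F A hA Finf hFinf ξ hξ s Λ' hΛ'F hco1 ρ n

end Paper
end
end
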